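/- (Lemma 1, out-of-distribution part.) The difference of out-of-distribution classification errors between reject-or-classify and unified uncertainty calibration satisfies err_{P^out}(RC) − err_{P^out}(U2C) = P^out(B) − P^out(C). -/
import Mathlib


open MeasureTheory

noncomputable section

/-- The maximum logit `max_j f(x)_j`. -/
def maxLogit {X : Type*} {c : ℕ} (f : X → Fin c → ℝ) (x : X) : ℝ := ⨆ j, f x j

/-- Region `A = {x : u(x) < θ ∧ max_j f(x)_j > τ(u(x))}`. -/
def regionA {X : Type*} {c : ℕ} (f : X → Fin c → ℝ) (u : X → ℝ) (θ : ℝ) (τ : ℝ → ℝ) :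
    Set X := {x | u x < θ ∧ τ (u x) < maxLogit f x}

/-- Region `B = {x : u(x) < θ ∧ max_j f(x)_j ≤ τ(u(x))}`. -/
def regionB {X : Type*} {c : ℕ} (f : X → Fin c → ℝ) (u : X → ℝ) (θ : ℝ) (τ : ℝ → ℝ) :
    Set X := {x | u x < θ ∧ maxLogit f x ≤ τ (u x)}

/-- Region `C = {x : u(x) ≥ θ ∧ max_j f(x)_j > τ(u(x))}`. -/
def regionC {X : Type*} {c : ℕ} (f : X → Fin c → ℝ) (u : X → ℝ) (θ : ℝ) (τ : ℝ → ℝ) :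
    Set X := {x | θ ≤ u x ∧ τ (u x) < maxLogit f x}

/-- Region `D = {x : u(x) ≥ θ ∧ max_j f(x)_j ≤ τ(u(x))}`. -/
def regionD {X : Type*} {c : ℕ} (f : X → Fin c → ℝ) (u : X → ℝ) (θ : ℝ) (τ : ℝ → ℝ) :
    Set X := {x | θ ≤ u x ∧ maxLogit f x ≤ τ (u x)}

/-- Softmax coordinates `s(f(x))_j = exp(f(x)_j) / Σ_k exp(f(x)_k)`. -/
def softmax {X : Type*} {c : ℕ} (f : X → Fin c → ℝ) (x : X) (j : Fin c) : ℝ :=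
  Real.exp (f x j) / ∑ k, Real.exp (f x k)

/-- Hard prediction of reject-or-classify over the extended label set `Fin (c+1)`:
the base prediction `h x` if `u x < θ`, the out-domain class `c+1` (i.e. `Fin.last c`)
otherwise. -/
def hRC {X : Type*} {c : ℕ} (h : X → Fin c) (u : X → ℝ) (θ : ℝ) (x : X) : Fin (c + 1) :=
  if u x < θ then (h x).castSucc else Fin.last c

/-- Hard prediction of unified uncertainty calibration over the extended label set:
the out-domain class `c+1` if `max_j f(x)_j ≤ τ(u(x))`, the base prediction otherwise. -/
def hU2C {X : Type*} {c : ℕ} (f : X → Fin c → ℝ) (h : X → Fin c) (u : X → ℝ) (τ : ℝ → ℝ)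
    (x : X) : Fin (c + 1) :=
  if maxLogit f x ≤ τ (u x) then Fin.last c else (h x).castSucc

/-- Extended softmax vector of reject-or-classify:
`(s(f(x))_1, …, s(f(x))_c, 0)` if `u x < θ`, and `(0, …, 0, 1)` otherwise. -/
def sRC {X : Type*} {c : ℕ} (f : X → Fin c → ℝ) (u : X → ℝ) (θ : ℝ) (x : X) :
    Fin (c + 1) → ℝ :=
  if u x < θ then Fin.snoc (fun j => softmax f x j) 0 else Fin.snoc (fun _ => 0) 1

/-- Extended softmax vector of unified uncertainty calibration:
coordinate `j ≤ c` is `exp(f(x)_j)/(Σ_k exp(f(x)_k) + exp(τ(u(x))))`, and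
coordinate `c+1` is `exp(τ(u(x)))/(Σ_k exp(f(x)_k) + exp(τ(u(x))))`. -/
def sU2C {X : Type*} {c : ℕ} (f : X → Fin c → ℝ) (u : X → ℝ) (τ : ℝ → ℝ) (x : X) :
    Fin (c + 1) → ℝ :=
  Fin.snoc (fun j => Real.exp (f x j) / (∑ k, Real.exp (f x k) + Real.exp (τ (u x))))
    (Real.exp (τ (u x)) / (∑ k, Real.exp (f x k) + Real.exp (τ (u x))))

/-- `−log p` valued in `[0,∞]`, with the convention `−log 0 = ∞`. -/
def negLog (p : ℝ) : ENNReal := if p = 0 then ⊤ else ENNReal.ofReal (-Real.log p)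

end

/-- `err_{P^out}(RC) − err_{P^out}(U2C) = P^out(B) − P^out(C)`. -/
theorem stmt2 {X : Type*} [MeasurableSpace X] {c : ℕ} (hc : 1 ≤ c)
    (f : X → Fin c → ℝ) (hf : Measurable f)
    (h : X → Fin c) (hh : Measurable h)
    (hargmax : ∀ x j, f x j ≤ f x (h x))
    (u : X → ℝ) (hu : Measurable u) (θ : ℝ)
    (τ : ℝ → ℝ) (hτ : Measurable τ)
    (Pout : Measure X) [IsProbabilityMeasure Pout] :
    (Pout {x | hRC h u θ x ≠ Fin.last c}).toReal
        - (Pout {x | hU2C f h u τ x ≠ Fin.last c}).toReal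
      = (Pout (regionB f u θ τ)).toReal - (Pout (regionC f u θ τ)).toReal := by

  classical
  haveI : Nonempty (Fin c) := Fin.pos_iff_nonempty.mp hc
  -- maxLogit equals f x (h x)
  have hmax : ∀ x, maxLogit f x = f x (h x) := fun x =>
    le_antisymm (ciSup_le fun j => hargmax x j)
      (le_ciSup (Set.Finite.bddAbove (Set.finite_range _)) (h x))
  -- measurability of x ↦ f x (h x)
  have hg : Measurable fun x => f x (h x) := by
    have : (fun x => f x (h x)) = fun x => ∑ j : Fin c, if h x = j then f x j else 0 := by
      funext x
      rw [Finset.sum_ite_eq Finset.univ (h x) (fun j => f x j)]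
      simp
    rw [this]
    exact Finset.measurable_sum _ fun j _ =>
      Measurable.ite (hh (MeasurableSet.singleton j)) ((measurable_pi_apply j).comp hf)
        measurable_const
  have hmaxm : Measurable (maxLogit f) := by
    have : maxLogit f = fun x => f x (h x) := funext hmax
    rw [this]; exact hg
  have hA : MeasurableSet (regionA f u θ τ) :=
    ((measurableSet_lt hu measurable_const).inter (measurableSet_lt (hτ.comp hu) hmaxm))
  have hB : MeasurableSet (regionB f u θ τ) :=
    ((measurableSet_lt hu measurable_const).inter (measurableSet_le hmaxm (hτ.comp hu)))
  have hC : MeasurableSet (regionC f u θ τ) :=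
    ((measurableSet_le measurable_const hu).inter (measurableSet_lt (hτ.comp hu) hmaxm))
  -- set identities
  have e1 : {x | hRC h u θ x ≠ Fin.last c} = regionA f u θ τ ∪ regionB f u θ τ := by
    ext x
    simp only [hRC, Set.mem_setOf_eq, Set.mem_union, regionA, regionB]
    by_cases hx : u x < θ
    · rw [if_pos hx]
      constructor
      · intro _
        rcases le_or_gt (maxLogit f x) (τ (u x)) with h1 | h1
        · exact Or.inr ⟨hx, h1⟩
        · exact Or.inl ⟨hx, h1⟩
      · intro _
        exact (Fin.castSucc_lt_last (h x)).ne
    · simp [hx, not_lt.mp hx]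
  have e2 : {x | hU2C f h u τ x ≠ Fin.last c} = regionA f u θ τ ∪ regionC f u θ τ := by
    ext x
    simp only [hU2C, Set.mem_setOf_eq, Set.mem_union, regionA, regionC]
    by_cases hx : maxLogit f x ≤ τ (u x)
    · simp [hx, not_lt.mpr hx]
    · rw [if_neg hx]
      constructor
      · intro _
        rcases lt_or_ge (u x) θ with h1 | h1
        · exact Or.inl ⟨h1, not_le.mp hx⟩
        · exact Or.inr ⟨h1, not_le.mp hx⟩
      · intro _
        exact (Fin.castSucc_lt_last (h x)).ne
  have dAB : Disjoint (regionA f u θ τ) (regionB f u θ τ) := by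
    rw [Set.disjoint_left]
    rintro x ⟨_, h1⟩ ⟨_, h2⟩
    exact absurd h2 (not_le.mpr h1)
  have dAC : Disjoint (regionA f u θ τ) (regionC f u θ τ) := by
    rw [Set.disjoint_left]
    rintro x ⟨h1, _⟩ ⟨h2, _⟩
    exact absurd h2 (not_le.mpr h1)
  rw [e1, e2, measure_union dAB hB, measure_union dAC hC,
    ENNReal.toReal_add (measure_ne_top _ _) (measure_ne_top _ _),
    ENNReal.toReal_add (measure_ne_top _ _) (measure_ne_top _ _)]
  ring
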